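/- arXiv:1205.6193 — 2 statements merged into one kernel-verified Lean document; each statement's English description precedes it below -/
import Mathlib

section
/- If the coefficient of risk aversion is constant (γ_{t_n} = γ for all n), then the time consistent certainty equivalents Y* and time inconsistent certainty equivalents Ŷ coincide at every period, the optimal time consistent strategy equals the optimal time inconsistent strategy (π* = π̂), and the two pricing kernels Λ* and Λ̂ coincide. -/
open MeasureTheory Real Filter

/-!
With constant risk aversion the two problems are the same backward recursion: the strategy
at period `k` is an explicit function of the certainty equivalent `Y (k+1)`, which in turn is
determined by the future wealth increments, i.e. by the strategies at periods `> k`.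
Downward induction from the horizon identifies the certainty equivalents, hence the
strategies and the pricing kernels.
-/

/-- Conditional expectation given a sub-σ-algebra `m` enlarged by the event `A`
(i.e. `E[f | A ∨ m]` restricted to the corresponding branch). -/
noncomputable def ceEvent {Ω : Type*} [mΩ : MeasurableSpace Ω] (μ : Measure Ω)
    (m : MeasurableSpace Ω) (A : Set Ω) (f : Ω → ℝ) : Ω → ℝ :=
  μ[f | m ⊔ MeasurableSpace.generateFrom {A}]

lemma Nat.eqOn_Iio_of_eqOn_Ioo {α : Type*} {a b : ℕ → α} {N : ℕ}
    (step : ∀ k < N, Set.EqOn a b (Set.Ioo k N) → a k = b k) :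
    Set.EqOn a b (Set.Iio N) := by
  intro k
  induction k using Nat.strong_decreasing_induction with
  | base => exact ⟨N, fun m hm hmN => (lt_asymm hm hmN).elim⟩
  | step k ih => exact fun hk => step k hk fun j hj => ih j hj.1 hj.2

section CertaintyEquivalent

variable {Ω : Type*} {m₀ : MeasurableSpace Ω}

def IsCertaintyEquivalent (μ : Measure[m₀] Ω) (m : MeasurableSpace Ω) (γ : ℝ) (Z Y : Ω → ℝ) :
    Prop :=
  ∀ ω, exp (-γ * Y ω) = μ[fun ω' => exp (-γ * Z ω') | m] ω

lemma IsCertaintyEquivalent.unique {μ : Measure[m₀] Ω} {m : MeasurableSpace Ω} {γ : ℝ}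
    {Z Y Y' : Ω → ℝ} (hγ : γ ≠ 0) (hY : IsCertaintyEquivalent μ m γ Z Y)
    (hY' : IsCertaintyEquivalent μ m γ Z Y') : Y = Y' :=
  funext fun ω =>
    mul_left_cancel₀ (neg_ne_zero.mpr hγ) (exp_injective ((hY ω).trans (hY' ω).symm))

end CertaintyEquivalent

theorem stmt8_general {Ω : Type*} [mΩ : MeasurableSpace Ω] (μ : Measure Ω) [IsProbabilityMeasure μ]
    (N : ℕ) (ℱ : Filtration ℕ mΩ) (h : ℝ)
    (Δb : ℕ → Ω → ℝ) (μc σc rc : ℕ → Ω → ℝ)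
    (D : ℕ → Ω → ℝ) (φ : ℕ → Ω → ℝ) (I : Ω → ℝ)
    (γ : ℕ → ℝ) (hγpos : ∀ n, 0 < γ n)
    -- the coefficient of risk aversion is constant
    (hγconst : ∀ n, γ n = γ 0)
    (A : ℕ → Set Ω)
    (Ystar Yhat αstar αhat ΔXstar ΔXhat Λstar Λhat : ℕ → Ω → ℝ)
    (lam : ℕ → Ω → ℝ)
    -- wealth increments
    (hXstar : ∀ k ω, ΔXstar k ω =
      αstar k ω * (μc k ω * h + σc k ω * Real.sqrt h * Δb k ω)
        + (D (k+1) ω - D k ω) + φ k ω * h)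
    (hXhat : ∀ k ω, ΔXhat k ω =
      αhat k ω * (μc k ω * h + σc k ω * Real.sqrt h * Δb k ω)
        + (D (k+1) ω - D k ω) + φ k ω * h)
    -- certainty equivalents, time consistent (risk aversion updated) and
    -- time inconsistent (risk aversion frozen at time 0)
    (hYstar : ∀ n, n < N → ∀ ω, Real.exp (-(γ n) * Ystar (n+1) ω) =
      (μ[(fun ω' => Real.exp (-(γ n) *
        ((∑ k ∈ Finset.Ico (n+1) N, ΔXstar k ω') + I ω'))) | ℱ (n+1)]) ω)
    (hYhat : ∀ n, n < N → ∀ ω, Real.exp (-(γ 0) * Yhat (n+1) ω) =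
      (μ[(fun ω' => Real.exp (-(γ 0) *
        ((∑ k ∈ Finset.Ico (n+1) N, ΔXhat k ω') + I ω'))) | ℱ (n+1)]) ω)
    -- optimal strategies
    (hαstar : ∀ k, k < N → ∀ ω, αstar k ω =
      1 / (2 * γ k * σc k ω * Real.sqrt h) *
        Real.log ((1 + rc k ω * Real.sqrt h) / (1 - rc k ω * Real.sqrt h))
      + 1 / (2 * γ k * σc k ω * Real.sqrt h) *
        Real.log
          (ceEvent μ (ℱ k) (A k)
              (fun ω' => Real.exp (-(γ k) * (D (k+1) ω' + Ystar (k+1) ω'))) ω /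
           ceEvent μ (ℱ k) ((A k)ᶜ)
              (fun ω' => Real.exp (-(γ k) * (D (k+1) ω' + Ystar (k+1) ω'))) ω))
    (hαhat : ∀ k, k < N → ∀ ω, αhat k ω =
      1 / (2 * γ 0 * σc k ω * Real.sqrt h) *
        Real.log ((1 + rc k ω * Real.sqrt h) / (1 - rc k ω * Real.sqrt h))
      + 1 / (2 * γ 0 * σc k ω * Real.sqrt h) *
        Real.log
          (ceEvent μ (ℱ k) (A k)
              (fun ω' => Real.exp (-(γ 0) * (D (k+1) ω' + Yhat (k+1) ω'))) ω /
           ceEvent μ (ℱ k) ((A k)ᶜ)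
              (fun ω' => Real.exp (-(γ 0) * (D (k+1) ω' + Yhat (k+1) ω'))) ω))
    -- one-step pricing kernels
    (hΛstar : ∀ n, n < N → ∀ ω, Λstar (n+1) ω =
      lam n ω * Real.exp (-(γ n) * (D (n+1) ω + Ystar (n+1) ω)) /
        (if Δb n ω = 1 then
          ceEvent μ (ℱ n) (A n)
            (fun ω' => Real.exp (-(γ n) * (D (n+1) ω' + Ystar (n+1) ω'))) ω
         else
          ceEvent μ (ℱ n) ((A n)ᶜ)
            (fun ω' => Real.exp (-(γ n) * (D (n+1) ω' + Ystar (n+1) ω'))) ω))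
    (hΛhat : ∀ n, n < N → ∀ ω, Λhat (n+1) ω =
      lam n ω * Real.exp (-(γ 0) * (D (n+1) ω + Yhat (n+1) ω)) /
        (if Δb n ω = 1 then
          ceEvent μ (ℱ n) (A n)
            (fun ω' => Real.exp (-(γ 0) * (D (n+1) ω' + Yhat (n+1) ω'))) ω
         else
          ceEvent μ (ℱ n) ((A n)ᶜ)
            (fun ω' => Real.exp (-(γ 0) * (D (n+1) ω' + Yhat (n+1) ω'))) ω)) :
    (∀ n, n < N → ∀ ω, Ystar (n+1) ω = Yhat (n+1) ω) ∧
    (∀ k, k < N → ∀ ω, αstar k ω = αhat k ω) ∧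
    (∀ n, n < N → ∀ ω, Λstar (n+1) ω = Λhat (n+1) ω) := by
  obtain ⟨g, rfl⟩ : ∃ g, γ = fun _ => g := ⟨γ 0, funext hγconst⟩
  beta_reduce at hγpos hYstar hYhat hαstar hαhat hΛstar hΛhat
  have hα_of_hY : ∀ k < N, Ystar (k+1) = Yhat (k+1) → αstar k = αhat k := by
    intro k hk hY
    funext ω
    rw [hαstar k hk ω, hαhat k hk ω, hY]
  have hY : ∀ n < N, Ystar (n+1) = Yhat (n+1) := by
    refine fun n hn => Nat.eqOn_Iio_of_eqOn_Ioo
      (a := fun n => Ystar (n+1)) (b := fun n => Yhat (n+1)) (fun k hk hfuture => ?_) hn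
    have hΔX : ∀ j ∈ Finset.Ico (k+1) N, ΔXstar j = ΔXhat j := fun j hj => by
      obtain ⟨hkj, hjN⟩ := Finset.mem_Ico.mp hj
      funext ω
      rw [hXstar, hXhat, hα_of_hY j hjN (hfuture ⟨hkj, hjN⟩)]
    refine IsCertaintyEquivalent.unique (hγpos 0).ne' (fun ω => ?_) (hYhat k hk)
    simpa only [Finset.sum_congr rfl fun j hj => congrFun (hΔX j hj) _] using hYstar k hk ω
  refine ⟨fun n hn => congrFun (hY n hn), fun k hk => congrFun (hα_of_hY k hk (hY k hk)),
    fun n hn ω => ?_⟩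
  rw [hΛstar n hn ω, hΛhat n hn ω, hY n hn]

theorem stmt8 {Ω : Type*} [mΩ : MeasurableSpace Ω] (μ : Measure Ω) [IsProbabilityMeasure μ]
    (N : ℕ) (ℱ : Filtration ℕ mΩ) (h : ℝ) (hh : 0 < h)
    (Δb : ℕ → Ω → ℝ) (μc σc rc : ℕ → Ω → ℝ)
    (hrc : ∀ n ω, rc n ω = μc n ω / σc n ω)
    (D : ℕ → Ω → ℝ) (φ : ℕ → Ω → ℝ) (I : Ω → ℝ)
    (γ : ℕ → ℝ) (hγpos : ∀ n, 0 < γ n)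
    -- the coefficient of risk aversion is constant
    (hγconst : ∀ n, γ n = γ 0)
    (A : ℕ → Set Ω) (hA : ∀ n, A n = {ω | Δb n ω = 1})
    (Ystar Yhat αstar αhat ΔXstar ΔXhat Λstar Λhat : ℕ → Ω → ℝ)
    (lam : ℕ → Ω → ℝ)
    (hlam : ∀ n ω, lam n ω =
      if Δb n ω = 1 then 1 - rc n ω * Real.sqrt h else 1 + rc n ω * Real.sqrt h)
    -- wealth increments
    (hXstar : ∀ k ω, ΔXstar k ω =
      αstar k ω * (μc k ω * h + σc k ω * Real.sqrt h * Δb k ω)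
        + (D (k+1) ω - D k ω) + φ k ω * h)
    (hXhat : ∀ k ω, ΔXhat k ω =
      αhat k ω * (μc k ω * h + σc k ω * Real.sqrt h * Δb k ω)
        + (D (k+1) ω - D k ω) + φ k ω * h)
    -- certainty equivalents, time consistent (risk aversion updated) and
    -- time inconsistent (risk aversion frozen at time 0)
    (hYstar : ∀ n, n < N → ∀ ω, Real.exp (-(γ n) * Ystar (n+1) ω) =
      (μ[(fun ω' => Real.exp (-(γ n) *
        ((∑ k ∈ Finset.Ico (n+1) N, ΔXstar k ω') + I ω'))) | ℱ (n+1)]) ω)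
    (hYhat : ∀ n, n < N → ∀ ω, Real.exp (-(γ 0) * Yhat (n+1) ω) =
      (μ[(fun ω' => Real.exp (-(γ 0) *
        ((∑ k ∈ Finset.Ico (n+1) N, ΔXhat k ω') + I ω'))) | ℱ (n+1)]) ω)
    -- optimal strategies
    (hαstar : ∀ k, k < N → ∀ ω, αstar k ω =
      1 / (2 * γ k * σc k ω * Real.sqrt h) *
        Real.log ((1 + rc k ω * Real.sqrt h) / (1 - rc k ω * Real.sqrt h))
      + 1 / (2 * γ k * σc k ω * Real.sqrt h) *
        Real.log
          (ceEvent μ (ℱ k) (A k)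
              (fun ω' => Real.exp (-(γ k) * (D (k+1) ω' + Ystar (k+1) ω'))) ω /
           ceEvent μ (ℱ k) ((A k)ᶜ)
              (fun ω' => Real.exp (-(γ k) * (D (k+1) ω' + Ystar (k+1) ω'))) ω))
    (hαhat : ∀ k, k < N → ∀ ω, αhat k ω =
      1 / (2 * γ 0 * σc k ω * Real.sqrt h) *
        Real.log ((1 + rc k ω * Real.sqrt h) / (1 - rc k ω * Real.sqrt h))
      + 1 / (2 * γ 0 * σc k ω * Real.sqrt h) *
        Real.log
          (ceEvent μ (ℱ k) (A k)
              (fun ω' => Real.exp (-(γ 0) * (D (k+1) ω' + Yhat (k+1) ω'))) ω /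
           ceEvent μ (ℱ k) ((A k)ᶜ)
              (fun ω' => Real.exp (-(γ 0) * (D (k+1) ω' + Yhat (k+1) ω'))) ω))
    -- one-step pricing kernels
    (hΛstar : ∀ n, n < N → ∀ ω, Λstar (n+1) ω =
      lam n ω * Real.exp (-(γ n) * (D (n+1) ω + Ystar (n+1) ω)) /
        (if Δb n ω = 1 then
          ceEvent μ (ℱ n) (A n)
            (fun ω' => Real.exp (-(γ n) * (D (n+1) ω' + Ystar (n+1) ω'))) ω
         else
          ceEvent μ (ℱ n) ((A n)ᶜ)
            (fun ω' => Real.exp (-(γ n) * (D (n+1) ω' + Ystar (n+1) ω'))) ω))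
    (hΛhat : ∀ n, n < N → ∀ ω, Λhat (n+1) ω =
      lam n ω * Real.exp (-(γ 0) * (D (n+1) ω + Yhat (n+1) ω)) /
        (if Δb n ω = 1 then
          ceEvent μ (ℱ n) (A n)
            (fun ω' => Real.exp (-(γ 0) * (D (n+1) ω' + Yhat (n+1) ω'))) ω
         else
          ceEvent μ (ℱ n) ((A n)ᶜ)
            (fun ω' => Real.exp (-(γ 0) * (D (n+1) ω' + Yhat (n+1) ω'))) ω)) :
    (∀ n, n < N → ∀ ω, Ystar (n+1) ω = Yhat (n+1) ω) ∧
    (∀ k, k < N → ∀ ω, αstar k ω = αhat k ω) ∧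
    (∀ n, n < N → ∀ ω, Λstar (n+1) ω = Λhat (n+1) ω) :=
  stmt8_general (mΩ := mΩ) μ N ℱ h Δb μc σc rc D φ I γ hγpos hγconst A Ystar Yhat αstar αhat ΔXstar
    ΔXhat Λstar Λhat lam hXstar hXhat hYstar hYhat hαstar hαhat hΛstar hΛhat
end

section
/- In a two-period model with zero income and a single traded asset with constant drift μ and volatility σ (0 < (μ/σ)√h < 1), the time consistent optimal strategy at time t₁ is α*_{t₁} = (1/(2γ_{t₁}σ√h))·log((1+r√h)/(1-r√h)) with r = μ/σ, so it depends on the risk aversion only through the current value γ_{t₁}. Consequently the time consistent strategy at t₁ coincides with the strategy an agent with fixed risk aversion γ_{t₁} would choose at t₁. -/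
open MeasureTheory Real Filter

/-!
Write `s = √h` and `k = γ_{t₁} σ s`. Since `μ h = σ s · r s`, the objective is
`-(1/2) (e^{-p a} + e^{q a})` with `p = k (1 + r s)` and `q = k (1 - r s)`, both positive when
`0 < r s < 1`. By convexity of `exp`, the critical point `b` of `a ↦ e^{-p a} + e^{q a}`, given by
`p e^{-p b} = q e^{q b}`, i.e. `b = log (p / q) / (p + q) = log ((1 + r s) / (1 - r s)) / (2 k)`,
is its strict global minimum.
-/

theorem isMaxOn_univ_and_unique_of_forall_lt {α β : Type*} [LinearOrder β] {f : α → β} {b : α}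
    (h : ∀ a ≠ b, f a < f b) : IsMaxOn f Set.univ b ∧ ∀ a, IsMaxOn f Set.univ a → a = b := by
  refine ⟨fun a _ => ?_, fun a ha => ?_⟩
  · rcases eq_or_ne a b with rfl | hab
    · exact le_rfl
    · exact (h a hab).le
  · by_contra hab
    exact (h a hab).not_ge (ha (Set.mem_univ b))

section ExpSum

variable {p q : ℝ}

/-- Tangent-line bounds for `exp` at `b`, strict for the first summand since `p ≠ 0`. -/
theorem exp_neg_mul_add_exp_mul_lt (hp : p ≠ 0) {b : ℝ}
    (hb : p * exp (-(p * b)) = q * exp (q * b)) {a : ℝ} (hab : a ≠ b) :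
    exp (-(p * b)) + exp (q * b) < exp (-(p * a)) + exp (q * a) := by
  have ht : a - b ≠ 0 := sub_ne_zero.mpr hab
  have hlt : exp (-(p * b)) * (1 - p * (a - b)) < exp (-(p * a)) := by
    have h := add_one_lt_exp (neg_ne_zero.mpr (mul_ne_zero hp ht))
    calc exp (-(p * b)) * (1 - p * (a - b))
        < exp (-(p * b)) * exp (-(p * (a - b))) := by
          gcongr; linarith
      _ = exp (-(p * a)) := by rw [← exp_add]; ring_nf
  have hle : exp (q * b) * (1 + q * (a - b)) ≤ exp (q * a) := by
    calc exp (q * b) * (1 + q * (a - b))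
        ≤ exp (q * b) * exp (q * (a - b)) := by
          gcongr; linarith [add_one_le_exp (q * (a - b))]
      _ = exp (q * a) := by rw [← exp_add]; ring_nf
  linear_combination hlt + hle + (a - b) * hb

theorem mul_exp_neg_mul_log_div_eq (hp : 0 < p) (hq : 0 < q) :
    p * exp (-(p * (log (p / q) / (p + q)))) = q * exp (q * (log (p / q) / (p + q))) := by
  have hpq : p + q ≠ 0 := by positivity
  have h : exp (q * (log (p / q) / (p + q))) =
      exp (log (p / q)) * exp (-(p * (log (p / q) / (p + q)))) := by
    rw [← exp_add]; congr 1; field_simp; ring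
  rw [h, exp_log (div_pos hp hq)]
  field_simp

end ExpSum

theorem stmt9_general {Ω : Type*}
    (γ : ℕ → Ω → ℝ) (hγpos : ∀ n ω, 0 < γ n ω)
    (m σc h : ℝ) (hσ : 0 < σc) (hh : 0 < h)
    (r : ℝ) (hrdef : r = m / σc)
    (hr0 : 0 < r * Real.sqrt h) (hr1 : r * Real.sqrt h < 1)
    (ω : Ω)
    -- the time-t₁ objective (zero income, single asset, constant coefficients)
    (f : ℝ → ℝ)
    (hf : ∀ a, f a = -(1/2) * (Real.exp (-(γ 1 ω) * a * (m * h + σc * Real.sqrt h))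
      + Real.exp (-(γ 1 ω) * a * (m * h - σc * Real.sqrt h))))
    (αstar : ℝ)
    (hαstar : αstar = 1 / (2 * γ 1 ω * σc * Real.sqrt h) *
      Real.log ((1 + r * Real.sqrt h) / (1 - r * Real.sqrt h))) :
    IsMaxOn f Set.univ αstar ∧
    (∀ a, IsMaxOn f Set.univ a → a = αstar) ∧
    -- the strategy depends on the risk aversion only through the current value γ_{t₁}:
    (∀ c : ℝ, c = γ 1 ω →
      1 / (2 * c * σc * Real.sqrt h) *
        Real.log ((1 + r * Real.sqrt h) / (1 - r * Real.sqrt h)) = αstar) := by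
  set s := Real.sqrt h
  set k := γ 1 ω * σc * s
  have hk : 0 < k := by have := hγpos 1 ω; positivity
  have hmh : m * h = σc * s * (r * s) := by
    rw [hrdef, show h = s * s from (mul_self_sqrt hh.le).symm]; field_simp
  have hp : 0 < k * (1 + r * s) := by nlinarith
  have hq : 0 < k * (1 - r * s) := by nlinarith
  have hf' : ∀ a, f a = -(1/2) * (exp (-(k * (1 + r * s) * a)) + exp (k * (1 - r * s) * a)) := by
    intro a
    rw [hf, hmh]
    congr 3 <;> simp only [k] <;> ring
  have hcrit : αstar = log (k * (1 + r * s) / (k * (1 - r * s))) /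
      (k * (1 + r * s) + k * (1 - r * s)) := by
    rw [hαstar, mul_div_mul_left _ _ hk.ne']; ring
  have hlt : ∀ a ≠ αstar, f a < f αstar := by
    intro a ha
    rw [hf', hf']
    have := exp_neg_mul_add_exp_mul_lt hp.ne' (hcrit ▸ mul_exp_neg_mul_log_div_eq hp hq) ha
    linarith
  obtain ⟨hmax, hunique⟩ := isMaxOn_univ_and_unique_of_forall_lt hlt
  exact ⟨hmax, hunique, fun c hc => hc ▸ hαstar.symm⟩

theorem stmt9 {Ω : Type*} [MeasurableSpace Ω]
    (γ : ℕ → Ω → ℝ) (hγpos : ∀ n ω, 0 < γ n ω)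
    (m σc h : ℝ) (hσ : 0 < σc) (hh : 0 < h)
    (r : ℝ) (hrdef : r = m / σc)
    (hr0 : 0 < r * Real.sqrt h) (hr1 : r * Real.sqrt h < 1)
    (ω : Ω)
    -- the time-t₁ objective (zero income, single asset, constant coefficients)
    (f : ℝ → ℝ)
    (hf : ∀ a, f a = -(1/2) * (Real.exp (-(γ 1 ω) * a * (m * h + σc * Real.sqrt h))
      + Real.exp (-(γ 1 ω) * a * (m * h - σc * Real.sqrt h))))
    (αstar : ℝ)
    (hαstar : αstar = 1 / (2 * γ 1 ω * σc * Real.sqrt h) *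
      Real.log ((1 + r * Real.sqrt h) / (1 - r * Real.sqrt h))) :
    IsMaxOn f Set.univ αstar ∧
    (∀ a, IsMaxOn f Set.univ a → a = αstar) ∧
    -- the strategy depends on the risk aversion only through the current value γ_{t₁}:
    (∀ c : ℝ, c = γ 1 ω →
      1 / (2 * c * σc * Real.sqrt h) *
        Real.log ((1 + r * Real.sqrt h) / (1 - r * Real.sqrt h)) = αstar) :=
  stmt9_general γ hγpos m σc h hσ hh r hrdef hr0 hr1 ω f hf αstar hαstar
end
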